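/- arXiv:2212.13320 — 4 statements merged into one kernel-verified Lean document; each statement's English description precedes it below -/
import Mathlib

section
/- Let (λ_b) be a sequence of real numbers indexed by natural numbers b ≥ 2 such that for each b, λ_b > 1 and λ_b^(2b) − λ_b^(2b−1) − λ_b^b − λ_b + 1 = 0. Then λ_b tends to 1 as b → ∞. -/
/-!
Dividing the equation by `λ^b` gives `λ^(b-1) (λ - 1) = 1 + (λ - 1) / λ^b < 2`, while Bernoulli's
inequality gives `λ^(b-1) ≥ 1 + (b-1)(λ - 1)`. Hence `(b-1)(λ - 1)^2 < 2`, so `λ_b - 1 = O(b^(-1/2))`.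
-/

open Filter Topology

lemma pow_pred_mul_sub_one_lt_two {x : ℝ} {b : ℕ} (hx : 1 < x) (hb : 1 ≤ b)
    (h : x ^ (2 * b) - x ^ (2 * b - 1) - x ^ b - x + 1 = 0) :
    x ^ (b - 1) * (x - 1) < 2 := by
  have hsplit : x ^ (2 * b - 1) = x ^ b * x ^ (b - 1) := by rw [← pow_add]; congr 1; omega
  have hsucc : x ^ (2 * b) = x ^ (2 * b - 1) * x := by rw [← pow_succ]; congr 1; omega
  have hxb : x ≤ x ^ b := le_self_pow₀ hx.le (by omega)
  have hpos : 0 < x ^ b := pow_pos (by linarith) b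
  have hkey : x ^ b * (x ^ (b - 1) * (x - 1)) = x ^ b + x - 1 := by
    rw [← mul_assoc, ← hsplit]; linear_combination h - hsucc
  nlinarith

lemma nat_mul_sq_sub_one_le_of_pow_mul_sub_one_le {x C : ℝ} {n : ℕ} (hx : 1 ≤ x)
    (h : x ^ n * (x - 1) ≤ C) : n * (x - 1) ^ 2 ≤ C := by
  have hbern : 1 + n * (x - 1) ≤ x ^ n := by
    simpa using one_add_mul_le_pow (by linarith : (-2 : ℝ) ≤ x - 1) n
  nlinarith

lemma le_sqrt_div_of_mul_sq_le {a C t : ℝ} (ht : 0 < t) (h : t * a ^ 2 ≤ C) :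
    a ≤ √(C / t) :=
  Real.le_sqrt_of_sq_le <| (le_div_iff₀ ht).2 <| by linarith

theorem stmt_1 (lam : ℕ → ℝ)
    (h1 : ∀ b : ℕ, 2 ≤ b → 1 < lam b)
    (h2 : ∀ b : ℕ, 2 ≤ b →
      (lam b) ^ (2 * b) - (lam b) ^ (2 * b - 1) - (lam b) ^ b - lam b + 1 = 0) :
    Filter.Tendsto lam Filter.atTop (nhds 1) := by
  have hbound : ∀ᶠ b in atTop, lam b - 1 ≤ √(2 / ((b - 1 : ℕ) : ℝ)) := by
    filter_upwards [eventually_ge_atTop 2] with b hb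
    exact le_sqrt_div_of_mul_sq_le (by norm_cast; omega)
      (nat_mul_sq_sub_one_le_of_pow_mul_sub_one_le (h1 b hb).le
        (pow_pred_mul_sub_one_lt_two (h1 b hb) (by omega) (h2 b hb)).le)
  have hsqrt : Tendsto (fun b : ℕ => √(2 / ((b - 1 : ℕ) : ℝ))) atTop (𝓝 0) := by
    simpa using ((tendsto_const_div_atTop_nhds_zero_nat 2).comp (tendsto_sub_atTop_nat 1)).sqrt
  rw [← tendsto_sub_nhds_zero_iff]
  refine squeeze_zero' ?_ hbound hsqrt
  filter_upwards [eventually_ge_atTop 2] with b hb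
  linarith [h1 b hb]
end

section
/- Assume the following form of Lehmer's Conjecture: there is a real number μ > 1 such that every monic polynomial p with integer coefficients having a complex root that is not a root of unity satisfies M(p) ≥ μ, where M(p) is the product over the complex roots z of p (with multiplicity) of max(1, |z|). Let N ≥ 2 be a natural number and let λ be a real number with λ > 1 that is integral over ℤ and satisfies λ^(2N−2) < μ. Suppose λ is a root of some nonzero polynomial q with integer coefficients having at most N nonzero coefficients, and that every complex root of the minimal polynomial of λ over ℚ has modulus at most λ. Then the minimal polynomial of λ over ℚ has a complex root ζ with nonzero imaginary part and |ζ| > 1. -/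
/-!
Suppose every root of the minimal polynomial of `λ` lying outside the closed unit disc were
real. Such roots are nonzero real roots of `q`, and Descartes' rule of signs, applied to `q(x)`
and `q(-x)`, allows at most `2N - 2` of them. The roots are simple and have modulus at most
`λ`, so the Mahler measure is at most `λ ^ (2N - 2) < μ`; but `λ > 1` is not a root of unity,
so Lehmer's bound gives Mahler measure at least `μ`.
-/

open Polynomial

namespace Polynomial

variable {R : Type*}

theorem coeff_comp_neg_X [Ring R] (P : R[X]) (n : ℕ) :
    (P.comp (-X)).coeff n = (-1) ^ n * P.coeff n := by
  induction P using Polynomial.induction_on' with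
  | add p q hp hq => simp only [add_comp, coeff_add, hp, hq, mul_add]
  | monomial k a =>
    rw [← C_mul_X_pow_eq_monomial, C_mul_comp, X_pow_comp, neg_pow, ← C_1, ← C_neg, ← C_pow,
      ← mul_assoc, ← C_mul, coeff_C_mul_X_pow, coeff_C_mul_X_pow]
    split_ifs with h
    · rw [h, ((Commute.neg_one_left a).pow_left k).eq]
    · rw [mul_zero]

theorem card_support_comp_neg_X [Ring R] (P : R[X]) :
    (P.comp (-X)).support.card = P.support.card := by
  congr 1
  ext n
  simp [coeff_comp_neg_X, (isUnit_neg_one.pow n).mul_right_eq_zero]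

theorem length_filter_sign_coeffList [Semiring R] [LinearOrder R] (P : R[X]) :
    ((P.coeffList.map SignType.sign).filter (· ≠ 0)).length = P.support.card := by
  rcases eq_or_ne P 0 with rfl | hP
  · simp
  rw [List.filter_map, List.length_map, coeffList, withBotSucc_degree_eq_natDegree_add_one hP,
    List.filter_map, List.length_map, List.filter_reverse, List.length_reverse,
    ← List.toFinset_card_of_nodup (List.nodup_range.filter _)]
  congr 1
  ext n
  simpa [Nat.lt_add_one_iff] using le_natDegree_of_ne_zero

theorem signVariations_le_card_support_sub_one [Semiring R] [LinearOrder R] (P : R[X]) :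
    P.signVariations ≤ P.support.card - 1 := by
  have hlen := (List.destutter_sublist (· ≠ ·)
    ((P.coeffList.map SignType.sign).filter (· ≠ 0))).length_le
  rw [length_filter_sign_coeffList] at hlen
  unfold signVariations
  omega

section OrderedRing

variable [CommRing R] [LinearOrder R] [IsStrictOrderedRing R]

theorem roots_countP_ne_zero_le_signVariations_add (P : R[X]) :
    P.roots.countP (· ≠ 0) ≤ P.signVariations + (P.comp (-X)).signVariations := by
  have hneg : P.roots.countP (· < 0) = (P.comp (-X)).roots.countP (0 < ·) := by
    rw [roots_comp_neg_X, Multiset.countP_map, Multiset.countP_eq_card_filter]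
    simp only [neg_pos]
  rw [Multiset.countP_eq_countP_filter_add _ _ (0 < ·), Multiset.countP_filter,
    Multiset.countP_filter]
  refine add_le_add ?_ ?_
  · refine le_of_eq_of_le (Multiset.countP_congr rfl fun x _ => ?_)
      (roots_countP_pos_le_signVariations P)
    exact eq_iff_iff.2 ⟨And.right, fun h => ⟨h.ne', h⟩⟩
  · refine le_of_eq_of_le (Multiset.countP_congr rfl fun x _ => ?_)
      (hneg ▸ roots_countP_pos_le_signVariations (P.comp (-X)))
    exact eq_iff_iff.2
      ⟨fun h => lt_of_le_of_ne (not_lt.1 h.2) h.1, fun h => ⟨h.ne, h.not_gt⟩⟩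

theorem roots_countP_ne_zero_le_card_support (P : R[X]) :
    P.roots.countP (· ≠ 0) ≤ 2 * (P.support.card - 1) := by
  have hpos := signVariations_le_card_support_sub_one P
  have hneg := signVariations_le_card_support_sub_one (P.comp (-X))
  rw [card_support_comp_neg_X] at hneg
  have := roots_countP_ne_zero_le_signVariations_add P
  omega

end OrderedRing

end Polynomial

theorem Multiset.prod_map_max_one_le_pow_countP {α : Type*} (s : Multiset α) (f : α → ℝ)
    {c : ℝ} (hc : 1 ≤ c) (hs : ∀ a ∈ s, f a ≤ c) :
    (s.map fun a => max 1 (f a)).prod ≤ c ^ s.countP (1 < f ·) := by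
  induction s using Multiset.induction_on with
  | empty => simp
  | cons a s ih =>
    specialize ih fun b hb => hs b (Multiset.mem_cons_of_mem hb)
    rw [Multiset.map_cons, Multiset.prod_cons, Multiset.countP_cons]
    split_ifs with ha
    · rw [max_eq_right ha.le, pow_succ, mul_comm]
      exact mul_le_mul ih (hs a (Multiset.mem_cons_self a s)) (zero_le_one.trans ha.le)
        (pow_nonneg (zero_le_one.trans hc) _)
    · rw [max_eq_left (not_lt.1 ha), one_mul, add_zero]
      exact ih

theorem Complex.card_le_roots_countP_ne_zero {s : Multiset ℂ} (hs : s.Nodup) {g : ℝ[X]}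
    (hg : g ≠ 0) (h : ∀ z ∈ s, z.im = 0 ∧ z ≠ 0 ∧ aeval z g = 0) :
    Multiset.card s ≤ g.roots.countP (· ≠ 0) := by
  rw [Multiset.countP_eq_card_filter, ← Multiset.card_map Complex.ofReal]
  refine Multiset.card_le_card ((Multiset.le_iff_subset hs).2 fun z hz => ?_)
  obtain ⟨him, hz0, hroot⟩ := h z hz
  have hz_re : (z.re : ℂ) = z := Complex.ext rfl him.symm
  rw [← hz_re, ← Complex.coe_algebraMap, aeval_algebraMap_apply_eq_algebraMap_eval,
    map_eq_zero] at hroot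
  refine Multiset.mem_map.2
    ⟨z.re, Multiset.mem_filter.2 ⟨(mem_roots hg).2 hroot, ?_⟩, hz_re⟩
  rintro h0
  exact hz0 (by rw [← hz_re, h0, Complex.ofReal_zero])

theorem minpoly_int_map_eq {A K : Type*} [CommRing A] [IsDomain A] [Algebra ℚ A] [Field K]
    [CharZero K] {x : A} (hx : IsIntegral ℤ x) :
    (minpoly ℤ x).map (Int.castRingHom K) = (minpoly ℚ x).map (algebraMap ℚ K) := by
  rw [minpoly.isIntegrallyClosed_eq_field_fractions' ℚ hx, map_map]
  congr 1
  exact RingHom.ext_int _ _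

theorem countP_one_lt_norm_roots_minpoly_le {x : ℝ} (hx : IsIntegral ℚ x) {q : ℤ[X]}
    (hq : q ≠ 0) (hqx : aeval x q = 0)
    (hreal : ∀ z : ℂ, ((minpoly ℚ x).map (algebraMap ℚ ℂ)).IsRoot z → 1 < ‖z‖ →
      z.im = 0) :
    ((minpoly ℚ x).map (algebraMap ℚ ℂ)).roots.countP (1 < ‖·‖) ≤
      2 * (q.support.card - 1) := by
  set P := (minpoly ℚ x).map (algebraMap ℚ ℂ)
  set qℝ := q.map (algebraMap ℤ ℝ)
  have hq_dvd : minpoly ℚ x ∣ q.map (algebraMap ℤ ℚ) :=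
    minpoly.dvd ℚ x (by rwa [aeval_map_algebraMap])
  have hbig_roots :
      ∀ z ∈ P.roots.filter (1 < ‖·‖), z.im = 0 ∧ z ≠ 0 ∧ aeval z qℝ = 0 := by
    intro z hz
    obtain ⟨hz_root, hz_big⟩ := Multiset.mem_filter.1 hz
    rw [mem_roots (map_ne_zero (minpoly.ne_zero hx))] at hz_root
    refine ⟨hreal z hz_root hz_big, ?_, ?_⟩
    · rintro rfl
      norm_num at hz_big
    · rw [IsRoot, eval_map_algebraMap] at hz_root
      rw [aeval_map_algebraMap, ← aeval_map_algebraMap ℚ]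
      exact aeval_eq_zero_of_dvd_aeval_eq_zero hq_dvd hz_root
  have hqℝ : qℝ ≠ 0 := (Polynomial.map_ne_zero_iff (algebraMap ℤ ℝ).injective_int).2 hq
  calc P.roots.countP (1 < ‖·‖) = Multiset.card (P.roots.filter (1 < ‖·‖)) :=
        Multiset.countP_eq_card_filter _ _
    _ ≤ qℝ.roots.countP (· ≠ 0) := Complex.card_le_roots_countP_ne_zero
        ((nodup_roots (minpoly.irreducible hx).separable.map).filter _) hqℝ hbig_roots
    _ ≤ 2 * (qℝ.support.card - 1) := roots_countP_ne_zero_le_card_support qℝ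
    _ ≤ 2 * (q.support.card - 1) := by
        have : qℝ.support.card ≤ q.support.card := Finset.card_le_card (support_map_subset _ q)
        omega

theorem stmt_9_general (μ : ℝ)
    (lehmer : ∀ p : ℤ[X], p.Monic →
      (∃ z : ℂ, (p.map (Int.castRingHom ℂ)).IsRoot z ∧ ¬ ∃ n : ℕ, 0 < n ∧ z ^ n = 1) →
      μ ≤ (((p.map (Int.castRingHom ℂ)).roots).map (fun z => max 1 ‖z‖)).prod)
    (N : ℕ) (lam : ℝ) (hlam : 1 < lam)
    (hint : IsIntegral ℤ lam)
    (hsmall : lam ^ (2 * N - 2) < μ)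
    (q : ℤ[X]) (hq : q ≠ 0) (hqN : q.support.card ≤ N)
    (hqlam : Polynomial.aeval lam q = 0)
    (hconj : ∀ z : ℂ, ((minpoly ℚ lam).map (algebraMap ℚ ℂ)).IsRoot z →
      ‖z‖ ≤ lam) :
    ∃ ζ : ℂ, ((minpoly ℚ lam).map (algebraMap ℚ ℂ)).IsRoot ζ ∧
      ζ.im ≠ 0 ∧ 1 < ‖ζ‖ := by
  by_contra! hcon
  have hlamℚ : IsIntegral ℚ lam := hint.tower_top
  have hP0 : (minpoly ℚ lam).map (algebraMap ℚ ℂ) ≠ 0 :=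
    map_ne_zero (minpoly.ne_zero hlamℚ)
  have hlam_root : ((minpoly ℚ lam).map (algebraMap ℚ ℂ)).IsRoot lam := by
    rw [IsRoot, eval_map_algebraMap, ← Complex.coe_algebraMap, aeval_algebraMap_apply,
      minpoly.aeval, map_zero]
  have hlam_not_unity : ¬ ∃ n : ℕ, 0 < n ∧ (lam : ℂ) ^ n = 1 := by
    rintro ⟨n, hn, hpow⟩
    have := Complex.norm_eq_one_of_pow_eq_one hpow hn.ne'
    rw [Complex.norm_real, Real.norm_of_nonneg (by linarith)] at this
    linarith
  have hPℤ := minpoly_int_map_eq (K := ℂ) hint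
  have hM := hPℤ ▸ lehmer _ (minpoly.monic hint) ⟨lam, hPℤ ▸ hlam_root, hlam_not_unity⟩
  have hbig := countP_one_lt_norm_roots_minpoly_le hlamℚ hq hqlam
    fun z hz hz_big => not_not.1 fun him => (hcon z hz him).not_gt hz_big
  have hprod := Multiset.prod_map_max_one_le_pow_countP _ _ hlam.le
    fun z hz => hconj z ((mem_roots hP0).1 hz)
  have hpow : lam ^ _ ≤ lam ^ (2 * N - 2) :=
    pow_le_pow_right₀ hlam.le (hbig.trans (by omega))
  linarith

theorem stmt_9 (μ : ℝ) (hμ : 1 < μ)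
    (lehmer : ∀ p : ℤ[X], p.Monic →
      (∃ z : ℂ, (p.map (Int.castRingHom ℂ)).IsRoot z ∧ ¬ ∃ n : ℕ, 0 < n ∧ z ^ n = 1) →
      μ ≤ (((p.map (Int.castRingHom ℂ)).roots).map (fun z => max 1 ‖z‖)).prod)
    (N : ℕ) (hN : 2 ≤ N) (lam : ℝ) (hlam : 1 < lam)
    (hint : IsIntegral ℤ lam)
    (hsmall : lam ^ (2 * N - 2) < μ)
    (q : ℤ[X]) (hq : q ≠ 0) (hqN : q.support.card ≤ N)
    (hqlam : Polynomial.aeval lam q = 0)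
    (hconj : ∀ z : ℂ, ((minpoly ℚ lam).map (algebraMap ℚ ℂ)).IsRoot z →
      ‖z‖ ≤ lam) :
    ∃ ζ : ℂ, ((minpoly ℚ lam).map (algebraMap ℚ ℂ)).IsRoot ζ ∧
      ζ.im ≠ 0 ∧ 1 < ‖ζ‖ :=
  stmt_9_general μ lehmer N lam hlam hint hsmall q hq hqN hqlam hconj
end

section
/- Let α be a complex number that is integral over ℤ, with α ≠ 0, α ≠ 1 and α ≠ −1, and suppose that every complex root of the minimal polynomial of α over ℚ is real. Let d be the degree of this minimal polynomial and let M be the product over its complex roots z (with multiplicity) of max(1, |z|). Then M² ≥ ((1 + √5)/2)^d. -/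
/-!
For a real number `x`, weighted AM-GM with weights `φ⁻¹, φ⁻²` gives
`φ ^ √5 * |x| ^ (√5 - 1) * |x² - 1| ≤ max 1 |x| ^ (2√5)`.
Multiplying over the (real) conjugates `x` of `α` turns the left side into
`φ ^ (√5 d) * |p(0)| ^ (√5 - 1) * |p(1) p(-1)|` and the right side into `M ^ (2√5)`,
where `p` is the minimal polynomial of `α`. Since `p` has integer coefficients and no rational
root, `p(0)`, `p(1)`, `p(-1)` are nonzero integers, so `φ ^ (√5 d) ≤ M ^ (2√5)`.
-/

open Polynomial Real goldenRatio

lemma one_lt_sqrt_five : 1 < √5 := by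
  rw [lt_sqrt zero_le_one]; norm_num

lemma one_add_sqrt_five : 1 + √5 = 2 * φ := by
  rw [goldenRatio]; ring

lemma inv_goldenRatio_add_inv_goldenRatio_sq : φ⁻¹ + (φ ^ 2)⁻¹ = 1 := by
  field_simp
  nlinarith [sq_sqrt (show (0 : ℝ) ≤ 5 by norm_num)]

lemma goldenRatio_rpow_sqrt_five_mul_sq_sub_one_le {t : ℝ} (ht : 0 ≤ t) :
    φ ^ √5 * (t ^ 2 - 1) ≤ t ^ (1 + √5) := by
  have hφ := goldenRatio_pos
  have amgm := geom_mean_le_arith_mean2_weighted (inv_nonneg.2 hφ.le)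
    (inv_nonneg.2 (sq_nonneg φ)) (by positivity : 0 ≤ φ * t ^ (1 + √5))
    (by positivity : 0 ≤ φ ^ (√5 + 2)) inv_goldenRatio_add_inv_goldenRatio_sq
  have hexp : φ⁻¹ + (√5 + 2) * (φ ^ 2)⁻¹ = √5 := by
    field_simp
    nlinarith [sq_sqrt (show (0 : ℝ) ≤ 5 by norm_num)]
  have hgeom : (φ * t ^ (1 + √5)) ^ φ⁻¹ * (φ ^ (√5 + 2)) ^ (φ ^ 2)⁻¹ = φ ^ √5 * t ^ 2 := by
    rw [mul_rpow hφ.le (by positivity), ← rpow_mul ht, ← rpow_mul hφ.le, one_add_sqrt_five,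
      mul_inv_cancel_right₀ hφ.ne', mul_right_comm, ← rpow_add hφ, hexp, rpow_two]
  have harith :
      φ⁻¹ * (φ * t ^ (1 + √5)) + (φ ^ 2)⁻¹ * φ ^ (√5 + 2) = t ^ (1 + √5) + φ ^ √5 := by
    rw [rpow_add hφ, rpow_two]
    field_simp
  nlinarith

/-- For `t < 1` this is the case `t > 1` applied to `t⁻¹`. -/
lemma goldenRatio_rpow_mul_rpow_mul_abs_sq_sub_one_le {t : ℝ} (ht : 0 ≤ t) :
    φ ^ √5 * t ^ (√5 - 1) * |t ^ 2 - 1| ≤ max 1 t ^ (2 * √5) := by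
  have h5 := one_lt_sqrt_five
  have hsplit : t ^ (1 + √5) = t ^ (√5 - 1) * t ^ 2 := by
    rw [← rpow_natCast, ← rpow_add' ht (by linarith)]
    ring_nf
  rcases le_or_gt 1 t with h1 | h1
  · rw [max_eq_right h1, abs_of_nonneg (by nlinarith)]
    calc φ ^ √5 * t ^ (√5 - 1) * (t ^ 2 - 1) = t ^ (√5 - 1) * (φ ^ √5 * (t ^ 2 - 1)) := by ring
      _ ≤ t ^ (√5 - 1) * t ^ (1 + √5) := by
        gcongr; exact goldenRatio_rpow_sqrt_five_mul_sq_sub_one_le ht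
      _ = t ^ (2 * √5) := by rw [← rpow_add' ht (by linarith)]; ring_nf
  rw [max_eq_left h1.le, one_rpow, abs_of_nonpos (by nlinarith)]
  rcases ht.eq_or_lt with rfl | ht0
  · rw [zero_rpow (by linarith)]
    simp
  calc φ ^ √5 * t ^ (√5 - 1) * -(t ^ 2 - 1) = t ^ (1 + √5) * (φ ^ √5 * (t⁻¹ ^ 2 - 1)) := by
        rw [hsplit]; field_simp; ring
    _ ≤ t ^ (1 + √5) * t⁻¹ ^ (1 + √5) := by
        gcongr; exact goldenRatio_rpow_sqrt_five_mul_sq_sub_one_le (inv_nonneg.2 ht)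
    _ = 1 := by rw [inv_rpow ht, mul_inv_cancel₀ (by positivity)]

theorem goldenRatio_pow_card_le_prod_max_sq (s : Multiset ℝ)
    (h0 : 1 ≤ (s.map fun x => |x|).prod) (h1 : 1 ≤ (s.map fun x => |x ^ 2 - 1|).prod) :
    φ ^ Multiset.card s ≤ (s.map fun x => max 1 |x|).prod ^ 2 := by
  have h5 := one_lt_sqrt_five
  set M := (s.map fun x => max 1 |x|).prod
  have hM : 0 ≤ M := Multiset.prod_nonneg fun _ hx => by
    obtain ⟨x, -, rfl⟩ := Multiset.mem_map.1 hx; positivity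
  have hprod : (φ ^ √5) ^ Multiset.card s * (s.map fun x => |x|).prod ^ (√5 - 1) *
      (s.map fun x => |x ^ 2 - 1|).prod ≤ M ^ (2 * √5) := by
    calc _ = (s.map fun x => φ ^ √5 * |x| ^ (√5 - 1) * |x ^ 2 - 1|).prod := by
          rw [Multiset.prod_map_mul, Multiset.prod_map_mul, Multiset.map_const',
            Multiset.prod_replicate,
            Real.multiset_prod_map_rpow _ _ (fun _ _ => abs_nonneg _)]
      _ ≤ (s.map fun x => max 1 |x| ^ (2 * √5)).prod :=
          Multiset.prod_map_le_prod_map₀ _ _ (fun _ _ => by positivity) fun x _ => by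
            simpa only [sq_abs] using
              goldenRatio_rpow_mul_rpow_mul_abs_sq_sub_one_le (abs_nonneg x)
      _ = M ^ (2 * √5) := Real.multiset_prod_map_rpow _ _ (fun _ _ => by positivity) _
  have hpow : (φ ^ Multiset.card s) ^ √5 ≤ (M ^ 2) ^ √5 := by
    calc (φ ^ Multiset.card s) ^ √5 = (φ ^ √5) ^ Multiset.card s := by
          rw [← rpow_natCast, ← rpow_natCast, ← rpow_mul goldenRatio_pos.le,
            ← rpow_mul goldenRatio_pos.le, mul_comm]
      _ ≤ (φ ^ √5) ^ Multiset.card s * (s.map fun x => |x|).prod ^ (√5 - 1) *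
          (s.map fun x => |x ^ 2 - 1|).prod := by
        rw [mul_assoc]
        refine le_mul_of_one_le_right (by positivity) (one_le_mul_of_one_le_of_one_le ?_ h1)
        exact one_le_rpow h0 (by linarith)
      _ ≤ M ^ (2 * √5) := hprod
      _ = (M ^ 2) ^ √5 := by rw [← rpow_natCast, ← rpow_mul hM]; norm_num
  exact (rpow_le_rpow_iff (by positivity) (by positivity) (by linarith)).1 hpow

lemma minpoly_aeval_algebraMap_ne_zero {K L : Type*} [Field K] [CommRing L] [IsDomain L]
    [Algebra K L] {x : L} (hx : IsIntegral K x) {k : K} (hk : x ≠ algebraMap K L k) :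
    aeval (algebraMap K L k) (minpoly K x) ≠ 0 := by
  intro h
  have hmin : minpoly K x = X - C k := by
    rw [minpoly.eq_of_irreducible_of_monic (minpoly.irreducible hx) h (minpoly.monic hx),
      minpoly.eq_X_sub_C]
  have hroot := minpoly.aeval K x
  rw [hmin, map_sub, aeval_X, aeval_C, sub_eq_zero] at hroot
  exact hk hroot

lemma one_le_norm_eval_intCast_minpoly {α : ℂ} (hα : IsIntegral ℤ α) {k : ℤ} (hk : α ≠ k) :
    1 ≤ ‖((minpoly ℚ α).map (algebraMap ℚ ℂ)).eval (k : ℂ)‖ := by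
  have hne := minpoly_aeval_algebraMap_ne_zero hα.tower_top (k := (k : ℚ)) (by simpa using hk)
  have hcast : ((minpoly ℚ α).map (algebraMap ℚ ℂ)).eval (k : ℂ) =
      (((minpoly ℤ α).eval k : ℤ) : ℂ) := by
    rw [minpoly.isIntegrallyClosed_eq_field_fractions' ℚ hα, map_map, eval_intCast_map]
    simp
  rw [aeval_def, eval₂_eq_eval_map, map_intCast, hcast, Int.cast_ne_zero] at hne
  rw [hcast, Complex.norm_intCast]
  exact_mod_cast Int.one_le_abs hne

lemma Multiset.eq_map_ofReal_map_re {s : Multiset ℂ} (hs : ∀ z ∈ s, z.im = 0) :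
    s = (s.map Complex.re).map (↑) := by
  rw [Multiset.map_map]
  conv_lhs => rw [← Multiset.map_id s]
  exact Multiset.map_congr rfl fun z hz => Complex.ext (by simp) (by simp [hs z hz])

lemma Polynomial.Monic.norm_eval_ofReal {P : ℂ[X]} (hP : P.Monic) {s : Multiset ℝ}
    (hs : P.roots = s.map (↑)) (c : ℝ) : ‖P.eval (c : ℂ)‖ = (s.map fun x => |c - x|).prod := by
  have norm_prod (m : Multiset ℂ) : ‖m.prod‖ = (m.map (‖·‖)).prod :=
    map_multiset_prod normHom m
  rw [(IsAlgClosed.splits P).eval_eq_prod_roots_of_monic hP, hs, Multiset.map_map, norm_prod,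
    Multiset.map_map]
  congr 1
  refine Multiset.map_congr rfl fun x _ => ?_
  simp [← Complex.ofReal_sub, Complex.norm_real]

theorem stmt_10 (α : ℂ) (hint : IsIntegral ℤ α)
    (h0 : α ≠ 0) (h1 : α ≠ 1) (hm1 : α ≠ -1)
    (hreal : ∀ z ∈ ((minpoly ℚ α).map (algebraMap ℚ ℂ)).roots, z.im = 0) :
    (((((minpoly ℚ α).map (algebraMap ℚ ℂ)).roots).map
        (fun z => max 1 ‖z‖)).prod) ^ 2 ≥
      ((1 + Real.sqrt 5) / 2) ^ (minpoly ℚ α).natDegree := by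
  set P := (minpoly ℚ α).map (algebraMap ℚ ℂ)
  have hmonic : P.Monic := (minpoly.monic hint.tower_top).map _
  set s := P.roots.map Complex.re
  have hroots : P.roots = s.map (↑) := Multiset.eq_map_ofReal_map_re hreal
  have hdeg : (minpoly ℚ α).natDegree = Multiset.card s := by
    rw [Multiset.card_map, ← (IsAlgClosed.splits P).natDegree_eq_card_roots, natDegree_map]
  have hbound (k : ℤ) (hk : α ≠ k) : 1 ≤ (s.map fun x => |(k : ℝ) - x|).prod := by
    rw [← hmonic.norm_eval_ofReal hroots, Complex.ofReal_intCast]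
    exact one_le_norm_eval_intCast_minpoly hint hk
  rw [hroots, Multiset.map_map, hdeg, ge_iff_le]
  simp only [Function.comp_def, Complex.norm_real, Real.norm_eq_abs]
  refine goldenRatio_pow_card_le_prod_max_sq s (by simpa using hbound 0 (mod_cast h0)) ?_
  have h1m1 := one_le_mul_of_one_le_of_one_le (hbound 1 (mod_cast h1))
    (hbound (-1) (mod_cast hm1))
  rw [← Multiset.prod_map_mul] at h1m1
  refine h1m1.trans_eq (congrArg _ (Multiset.map_congr rfl fun x _ => ?_))
  rw [← abs_mul]
  push_cast
  ring_nf
end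

section
/- Let q = X^30 − X^29 − X^27 + X^26 + X^25 − X^24 − X^22 + X^21 − X^20 + X^19 − X^17 + X^16 − X^15 + X^14 − X^13 + X^11 − X^10 + X^9 − X^8 − X^6 + X^5 + X^4 − X^3 − X + 1 in ℤ[X]. Then X^34 − X^31 − 2X^24 − X^17 − 2X^10 − X^3 + 1 = (X^4 + X^3 + X^2 + X + 1)·q, and q has a real root strictly greater than 1 (in particular q is not a product of cyclotomic polynomials). -/
/-! Since `q(1) = -1 < 0 < q(2)`, the intermediate value theorem gives a root of `q` in `(1, 2)`.
Every cyclotomic polynomial is positive on `(1, ∞)`, hence so is every product of them, so such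
a product has no root there. -/

open Polynomial

theorem exists_mem_Ioo_aeval_eq_zero {R : Type*} [CommSemiring R] [Algebra R ℝ] (p : R[X])
    {a b : ℝ} (hab : a ≤ b) (ha : aeval a p < 0) (hb : 0 < aeval b p) :
    ∃ x ∈ Set.Ioo a b, aeval x p = 0 :=
  intermediate_value_Ioo hab (Polynomial.continuous_aeval p).continuousOn ⟨ha, hb⟩

theorem aeval_multiset_prod_cyclotomic_pos (s : Multiset ℕ) {x : ℝ} (hx : 1 < x) :
    0 < aeval x (s.map fun n => cyclotomic n ℤ).prod := by
  rw [map_multiset_prod, Multiset.map_map]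
  refine Multiset.prod_pos fun a ha => ?_
  obtain ⟨n, -, rfl⟩ := Multiset.mem_map.1 ha
  simpa [aeval_def, eval₂_eq_eval_map, map_cyclotomic] using cyclotomic_pos' n hx

theorem ne_multiset_prod_cyclotomic_of_aeval_eq_zero {p : ℤ[X]} {x : ℝ} (hx : 1 < x)
    (hp : aeval x p = 0) (s : Multiset ℕ) : p ≠ (s.map fun n => cyclotomic n ℤ).prod := by
  rintro rfl
  exact (aeval_multiset_prod_cyclotomic_pos s hx).ne' hp

theorem stmt_17 :
    let q : ℤ[X] := X ^ 30 - X ^ 29 - X ^ 27 + X ^ 26 + X ^ 25 - X ^ 24 - X ^ 22 + X ^ 21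
      - X ^ 20 + X ^ 19 - X ^ 17 + X ^ 16 - X ^ 15 + X ^ 14 - X ^ 13 + X ^ 11 - X ^ 10
      + X ^ 9 - X ^ 8 - X ^ 6 + X ^ 5 + X ^ 4 - X ^ 3 - X + 1
    ((X : ℤ[X]) ^ 34 - X ^ 31 - 2 * X ^ 24 - X ^ 17 - 2 * X ^ 10 - X ^ 3 + 1 =
        (X ^ 4 + X ^ 3 + X ^ 2 + X + 1) * q) ∧
      (∃ x : ℝ, 1 < x ∧ Polynomial.aeval x q = 0) ∧
      ¬ ∃ s : Multiset ℕ, q = (s.map (fun n => Polynomial.cyclotomic n ℤ)).prod := by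
  intro q
  have hroot : ∃ x : ℝ, 1 < x ∧ aeval x q = 0 := by
    obtain ⟨x, hx, hqx⟩ := exists_mem_Ioo_aeval_eq_zero q (a := 1) (b := 2) one_le_two
      (by norm_num [q]) (by norm_num [q])
    exact ⟨x, hx.1, hqx⟩
  refine ⟨by ring, hroot, ?_⟩
  rintro ⟨s, hs⟩
  obtain ⟨x, hx, hqx⟩ := hroot
  exact ne_multiset_prod_cyclotomic_of_aeval_eq_zero hx hqx s hs
end
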